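/- arXiv:1406.1069 — 2 statements merged into one kernel-verified Lean document; each statement's English description precedes it below -/
import Mathlib

section
/- Every occurrence net is safe (1-bounded): in every reachable marking, every place holds at most one token. -/
open scoped Classical
noncomputable section

/-- A place/transition Petri net: each transition has a precondition and a
postcondition multiset of places, and there is an initial marking. -/
structure Net (P T : Type) where
  pre : T → Multiset P
  post : T → Multiset P
  init : Multiset P

namespace Net

variable {P T : Type}

/-- Firing transition `t` at marking `M` yields `M'`. -/
def fires (N : Net P T) (t : T) (M M' : Multiset P) : Prop :=
  N.pre t ≤ M ∧ M' = M - N.pre t + N.post t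

def step (N : Net P T) (M M' : Multiset P) : Prop := ∃ t, N.fires t M M'

/-- `M'` is reachable from `M` by firing finitely many transitions. -/
def Reaches (N : Net P T) : Multiset P → Multiset P → Prop :=
  Relation.ReflTransGen N.step

/-- Reachable markings (from the initial marking). -/
def Reachable (N : Net P T) (M : Multiset P) : Prop := N.Reaches N.init M

/-- The flow relation on nodes (places ⊕ transitions). -/
def flow (N : Net P T) : P ⊕ T → P ⊕ T → Prop
  | Sum.inl p, Sum.inr t => p ∈ N.pre t
  | Sum.inr t, Sum.inl p => p ∈ N.post t
  | _, _ => False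

/-- Reflexive causal order `F*`. -/
def le (N : Net P T) (x y : P ⊕ T) : Prop := Relation.ReflTransGen N.flow x y

/-- Strict causal order `F⁺` (causal predecessor). -/
def lt (N : Net P T) (x y : P ⊕ T) : Prop := Relation.TransGen N.flow x y

/-- Nodes `x`, `y` are in conflict: some place `p` (different from both) has two
distinct outgoing arcs from which `x` resp. `y` are reachable via `F*`. -/
def Conflict (N : Net P T) (x y : P ⊕ T) : Prop :=
  ∃ (p : P) (t₁ t₂ : T), t₁ ≠ t₂ ∧ p ∈ N.pre t₁ ∧ p ∈ N.pre t₂ ∧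
    N.le (Sum.inr t₁) x ∧ N.le (Sum.inr t₂) y ∧ Sum.inl p ≠ x ∧ Sum.inl p ≠ y

/-- Nodes are concurrent if neither causally related nor in conflict. -/
def Concurrent (N : Net P T) (x y : P ⊕ T) : Prop :=
  ¬ N.le x y ∧ ¬ N.le y x ∧ ¬ N.Conflict x y

/-- Occurrence net. -/
structure IsOccurrence (N : Net P T) : Prop where
  pre_nodup : ∀ t, (N.pre t).Nodup
  post_nodup : ∀ t, (N.post t).Nodup
  pre_ne : ∀ t, N.pre t ≠ 0
  post_ne : ∀ t, N.post t ≠ 0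
  unique_pred : ∀ p t₁ t₂, p ∈ N.post t₁ → p ∈ N.post t₂ → t₁ = t₂
  wf : WellFounded (fun x y : P ⊕ T => N.flow y x)
  no_self_conflict : ∀ t : T, ¬ N.Conflict (Sum.inr t) (Sum.inr t)
  init_nodup : N.init.Nodup
  init_iff : ∀ p, p ∈ N.init ↔ ∀ t, p ∉ N.post t

/-- A cut: a maximal set of pairwise concurrent places. -/
def IsCut (N : Net P T) (C : Set P) : Prop :=
  (∀ p ∈ C, ∀ q ∈ C, p ≠ q → N.Concurrent (Sum.inl p) (Sum.inl q)) ∧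
  (∀ p : P, (∀ q ∈ C, p ≠ q → N.Concurrent (Sum.inl p) (Sum.inl q)) → p ∈ C)

end Net

namespace Net

variable {P T : Type} {N : Net P T}

private lemma lt_irrefl' (h : N.IsOccurrence) (x : P ⊕ T) : ¬ N.lt x x := by
  intro hx
  have hswap : Relation.TransGen (Function.swap N.flow) x x :=
    Relation.transGen_swap.mpr hx
  haveI : IsWellFounded (P ⊕ T) (Function.swap N.flow) := ⟨h.wf⟩
  have hwf : WellFounded (Relation.TransGen (Function.swap N.flow)) :=
    IsWellFounded.wf
  exact hwf.asymmetric _ _ hswap hswap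

/-- If `x F* (inl p)` and `x ≠ inl p`, the last arc comes from a transition
producing `p`. -/
private lemma le_last_place {x : P ⊕ T} {p : P}
    (hle : N.le x (Sum.inl p)) (hne : x ≠ Sum.inl p) :
    ∃ t, p ∈ N.post t ∧ N.le x (Sum.inr t) := by
  rcases Relation.ReflTransGen.cases_tail hle with heq | ⟨b, hb, hbp⟩
  · exact absurd heq.symm hne
  · cases b with
    | inl q => exact absurd hbp (by simp [Net.flow])
    | inr t => exact ⟨t, hbp, hb⟩

/-- If `x F* (inr t)` and `x ≠ inr t`, the last arc comes from a place in
`pre t`. -/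
private lemma le_last_trans {x : P ⊕ T} {t : T}
    (hle : N.le x (Sum.inr t)) (hne : x ≠ Sum.inr t) :
    ∃ r, r ∈ N.pre t ∧ N.le x (Sum.inl r) := by
  rcases Relation.ReflTransGen.cases_tail hle with heq | ⟨b, hb, hbp⟩
  · exact absurd heq.symm hne
  · cases b with
    | inl q => exact ⟨q, hbp, hb⟩
    | inr t' => exact absurd hbp (by simp [Net.flow])

private lemma conflict_symm {x y : P ⊕ T} (hc : N.Conflict x y) :
    N.Conflict y x := by
  obtain ⟨p, t₁, t₂, hne, h1, h2, hl1, hl2, hp1, hp2⟩ := hc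
  exact ⟨p, t₂, t₁, hne.symm, h2, h1, hl2, hl1, hp2, hp1⟩

/-- The invariant: a duplicate-free, pairwise concurrent marking. -/
def Coset (N : Net P T) (M : Multiset P) : Prop :=
  M.Nodup ∧ ∀ p ∈ M, ∀ q ∈ M, p ≠ q → N.Concurrent (Sum.inl p) (Sum.inl q)

private lemma coset_init (h : N.IsOccurrence) : N.Coset N.init := by
  refine ⟨h.init_nodup, fun p hp q hq hpq => ?_⟩
  have nole : ∀ a b : P, a ∈ N.init → b ∈ N.init → a ≠ b →
      ¬ N.le (Sum.inl a) (Sum.inl b) := by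
    intro a b ha hb hab hle
    obtain ⟨t, ht, -⟩ := le_last_place hle (by simpa using hab)
    exact ((h.init_iff b).mp hb t) ht
  refine ⟨nole p q hp hq hpq, nole q p hq hp hpq.symm, ?_⟩
  rintro ⟨s, t₁, t₂, -, -, -, -, hl2, -, -⟩
  obtain ⟨t, ht, -⟩ := le_last_place hl2 (by simp)
  exact ((h.init_iff q).mp hq t) ht

private lemma coset_step (h : N.IsOccurrence) {M M' : Multiset P}
    (hc : N.Coset M) (hs : N.step M M') : N.Coset M' := by
  obtain ⟨t, hpre, rfl⟩ := hs
  obtain ⟨hnd, hconc⟩ := hc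
  -- membership in the remainder implies not in pre t
  have hsub : M - N.pre t ≤ M := tsub_le_self
  have hrem_mem : ∀ q, q ∈ M - N.pre t → q ∈ M := fun q hq => Multiset.mem_of_le hsub hq
  have hqnotpre : ∀ q, q ∈ M - N.pre t → q ∉ N.pre t := by
    intro q hq hqp
    have h1 : 1 ≤ (M - N.pre t).count q := Multiset.one_le_count_iff_mem.mpr hq
    have h2 : M.count q ≤ 1 := (Multiset.nodup_iff_count_le_one.mp hnd) q
    have h3 : 1 ≤ (N.pre t).count q := Multiset.one_le_count_iff_mem.mpr hqp
    rw [Multiset.count_sub] at h1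
    omega
  have hpre_mem : ∀ r, r ∈ N.pre t → r ∈ M := fun r hr => Multiset.mem_of_le hpre hr
  -- a place produced by t cannot be causally below a place of the remainder,
  -- in particular it is not in the remainder
  have hA : ∀ p, p ∈ N.post t → ∀ q, q ∈ M - N.pre t →
      ¬ N.le (Sum.inl p) (Sum.inl q) := by
    intro p hp q hq hle
    obtain ⟨r, hr⟩ := Multiset.exists_mem_of_ne_zero (h.pre_ne t)
    have hrt : N.flow (Sum.inl r) (Sum.inr t) := hr
    have htp : N.flow (Sum.inr t) (Sum.inl p) := hp
    have hrq : N.lt (Sum.inl r) (Sum.inl q) :=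
      Relation.TransGen.head' hrt (Relation.ReflTransGen.head htp hle)
    by_cases hrq' : r = q
    · subst hrq'
      exact lt_irrefl' h _ hrq
    · exact (hconc r (hpre_mem r hr) q (hrem_mem q hq) hrq').1 hrq.to_reflTransGen
  have hdisj : ∀ p, p ∈ N.post t → p ∉ M - N.pre t := by
    intro p hp hpM
    exact hA p hp p hpM Relation.ReflTransGen.refl
  -- a place of the remainder cannot be causally below a place produced by t
  have hB : ∀ p, p ∈ N.post t → ∀ q, q ∈ M - N.pre t →
      ¬ N.le (Sum.inl q) (Sum.inl p) := by
    intro p hp q hq hle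
    have hqp : q ≠ p := fun he => hdisj p hp (he ▸ hq)
    obtain ⟨t'', ht'', hle2⟩ := le_last_place hle (by simpa using hqp)
    rw [h.unique_pred p t'' t ht'' hp] at hle2
    obtain ⟨r, hr, hle3⟩ := le_last_trans hle2 (by simp)
    have hqr : q ≠ r := fun he => hqnotpre q hq (he ▸ hr)
    exact (hconc q (hrem_mem q hq) r (hpre_mem r hr) hqr).1 hle3
  -- no conflict between a produced place and a remainder place
  have hC : ∀ p, p ∈ N.post t → ∀ q, q ∈ M - N.pre t →
      ¬ N.Conflict (Sum.inl p) (Sum.inl q) := by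
    intro p hp q hq hcf
    obtain ⟨s, t₁, t₂, ht12, hs1, hs2, hl1, hl2, hsp, hsq⟩ := hcf
    have hsq' : s ≠ q := fun he => hsq (by rw [he])
    obtain ⟨t'', ht'', hl1'⟩ := le_last_place hl1 (by simp)
    rw [h.unique_pred p t'' t ht'' hp] at hl1'
    -- path from s to q through t₂
    have hseq : N.le (Sum.inl s) (Sum.inl q) :=
      Relation.ReflTransGen.head (show N.flow (Sum.inl s) (Sum.inr t₂) from hs2) hl2
    by_cases ht1t : t₁ = t
    · subst ht1t
      exact (hconc s (hpre_mem s hs1) q (hrem_mem q hq) hsq').1 hseq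
    · obtain ⟨r, hr, hl1''⟩ := le_last_trans hl1' (by simpa using ht1t)
      by_cases hsr : s = r
      · subst hsr
        exact (hconc s (hpre_mem s hr) q (hrem_mem q hq) hsq').1 hseq
      · have hrq : r ≠ q := fun he => hqnotpre q hq (he ▸ hr)
        have : N.Conflict (Sum.inl r) (Sum.inl q) :=
          ⟨s, t₁, t₂, ht12, hs1, hs2, hl1'', hl2, by simpa using hsr, hsq⟩
        exact (hconc r (hpre_mem r hr) q (hrem_mem q hq) hrq).2.2 this
  -- places produced by t are pairwise concurrent
  have hE : ∀ p, p ∈ N.post t → ∀ q, q ∈ N.post t → p ≠ q →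
      N.Concurrent (Sum.inl p) (Sum.inl q) := by
    have nole : ∀ a b : P, a ∈ N.post t → b ∈ N.post t → a ≠ b →
        ¬ N.le (Sum.inl a) (Sum.inl b) := by
      intro a b ha hb hab hle
      obtain ⟨t'', ht'', hle2⟩ := le_last_place hle (by simpa using hab)
      rw [h.unique_pred b t'' t ht'' hb] at hle2
      obtain ⟨r, hr, hle3⟩ := le_last_trans hle2 (by simp)
      have hcyc : N.lt (Sum.inl a) (Sum.inl a) := by
        have h1 : Relation.ReflTransGen N.flow (Sum.inl a) (Sum.inr t) :=
          hle3.trans (Relation.ReflTransGen.single (show N.flow (Sum.inl r) (Sum.inr t) from hr))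
        exact Relation.TransGen.tail' h1 (show N.flow (Sum.inr t) (Sum.inl a) from ha)
      exact lt_irrefl' h _ hcyc
    intro p hp q hq hpq
    refine ⟨nole p q hp hq hpq, nole q p hq hp hpq.symm, ?_⟩
    rintro ⟨s, t₁, t₂, ht12, hs1, hs2, hl1, hl2, hsp, hsq⟩
    obtain ⟨t'', ht'', hl1'⟩ := le_last_place hl1 (by simp)
    rw [h.unique_pred p t'' t ht'' hp] at hl1'
    obtain ⟨t''', ht''', hl2'⟩ := le_last_place hl2 (by simp)
    rw [h.unique_pred q t''' t ht''' hq] at hl2'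
    exact h.no_self_conflict t
      ⟨s, t₁, t₂, ht12, hs1, hs2, hl1', hl2', by simp, by simp⟩
  -- assemble
  constructor
  · rw [Multiset.nodup_iff_count_le_one]
    intro a
    rw [Multiset.count_add]
    have h1 : (M - N.pre t).count a ≤ 1 := by
      have := Multiset.count_le_of_le a hsub
      have := (Multiset.nodup_iff_count_le_one.mp hnd) a
      omega
    have h2 : (N.post t).count a ≤ 1 :=
      (Multiset.nodup_iff_count_le_one.mp (h.post_nodup t)) a
    by_cases hmem : a ∈ N.post t
    · have : a ∉ M - N.pre t := hdisj a hmem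
      have : (M - N.pre t).count a = 0 := Multiset.count_eq_zero.mpr this
      omega
    · have : (N.post t).count a = 0 := Multiset.count_eq_zero.mpr hmem
      omega
  · intro p hp q hq hpq
    rw [Multiset.mem_add] at hp hq
    rcases hp with hp | hp <;> rcases hq with hq | hq
    · exact hconc p (hrem_mem p hp) q (hrem_mem q hq) hpq
    · exact ⟨hB q hq p hp, hA q hq p hp, fun hcf => hC q hq p hp (conflict_symm hcf)⟩
    · exact ⟨hA p hp q hq, hB p hp q hq, hC p hp q hq⟩
    · exact hE p hp q hq hpq

end Net

/-- Every occurrence net is safe (1-bounded): in every reachable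
marking, every place holds at most one token. -/
theorem stmt1 {P T : Type} (N : Net P T) (h : N.IsOccurrence)
    (M : Multiset P) (hM : N.Reachable M) (p : P) : M.count p ≤ 1 := by
  have hcos : N.Coset M := by
    induction hM with
    | refl => exact Net.coset_init h
    | tail _ hstep ih => exact Net.coset_step h ih hstep
  exact (Multiset.nodup_iff_count_le_one.mp hcos.1) p
end
end

section
/- In an occurrence net, if C is a cut and t is a transition with pre(t) ⊆ C, then (C \ pre(t)) ∪ post(t) is again a cut. -/
open scoped Classical
noncomputable section

section Aux

open Relation Sum

variable {P T : Type} {N : Net P T}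

lemma flow_into_place {x : P ⊕ T} {q : P} (hf : N.flow x (inl q)) :
    ∃ t', x = inr t' ∧ q ∈ N.post t' := by
  cases x with
  | inl p => simp [Net.flow] at hf
  | inr t' => exact ⟨t', rfl, hf⟩

lemma flow_into_trans {x : P ⊕ T} {t : T} (hf : N.flow x (inr t)) :
    ∃ r, x = inl r ∧ r ∈ N.pre t := by
  cases x with
  | inl p => exact ⟨p, rfl, hf⟩
  | inr t' => simp [Net.flow] at hf

lemma flow_from_trans {y : P ⊕ T} {t : T} (hf : N.flow (inr t) y) :
    ∃ r, y = inl r ∧ r ∈ N.post t := by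
  cases y with
  | inl p => exact ⟨p, rfl, hf⟩
  | inr t' => simp [Net.flow] at hf

lemma flow_from_place {y : P ⊕ T} {q : P} (hf : N.flow (inl q) y) :
    ∃ t', y = inr t' ∧ q ∈ N.pre t' := by
  cases y with
  | inl p => simp [Net.flow] at hf
  | inr t' => exact ⟨t', rfl, hf⟩

lemma net_lt_irrefl (h : N.IsOccurrence) (x : P ⊕ T) : ¬ N.lt x x := by
  intro hx
  have hwf : WellFounded (Relation.TransGen (fun a b : P ⊕ T => N.flow b a)) :=
    h.wf.transGen
  exact hwf.isIrrefl.irrefl _ (Relation.transGen_swap.mpr hx)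

lemma le_flow_absurd (h : N.IsOccurrence) {x y : P ⊕ T}
    (hle : N.le x y) (hf : N.flow y x) : False :=
  net_lt_irrefl h x (Relation.TransGen.tail' hle hf)

lemma flow_le_absurd (h : N.IsOccurrence) {x y : P ⊕ T}
    (hf : N.flow x y) (hle : N.le y x) : False :=
  net_lt_irrefl h x (Relation.TransGen.head' hf hle)

/-- Last step into a place must come from its unique producer. -/
lemma last_producer (h : N.IsOccurrence) {x : P ⊕ T} {q : P} {t : T}
    (hq : q ∈ N.post t) (hle : N.le x (inl q)) (hne : x ≠ inl q) :
    N.le x (inr t) := by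
  rcases Relation.ReflTransGen.cases_tail hle with heq | ⟨c, hxc, hcq⟩
  · exact absurd heq.symm hne
  · obtain ⟨t', rfl, hq'⟩ := flow_into_place hcq
    rw [h.unique_pred q t' t hq' hq] at hxc
    exact hxc

lemma last_into_trans {x : P ⊕ T} {t : T}
    (hle : N.le x (inr t)) (hne : x ≠ inr t) :
    ∃ r, r ∈ N.pre t ∧ N.le x (inl r) := by
  rcases Relation.ReflTransGen.cases_tail hle with heq | ⟨c, hxc, hct⟩
  · exact absurd heq.symm hne
  · obtain ⟨r, rfl, hr⟩ := flow_into_trans hct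
    exact ⟨r, hr, hxc⟩

lemma first_from_trans {y : P ⊕ T} {t : T}
    (hle : N.le (inr t) y) (hne : y ≠ inr t) :
    ∃ r, r ∈ N.post t ∧ N.le (inl r) y := by
  rcases Relation.ReflTransGen.cases_head hle with heq | ⟨c, htc, hcy⟩
  · exact absurd heq.symm hne
  · obtain ⟨r, rfl, hr⟩ := flow_from_trans htc
    exact ⟨r, hr, hcy⟩

lemma conflict_symm {x y : P ⊕ T} (hc : N.Conflict x y) : N.Conflict y x := by
  obtain ⟨p, t₁, t₂, hne, h1, h2, hx, hy, hpx, hpy⟩ := hc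
  exact ⟨p, t₂, t₁, hne.symm, h2, h1, hy, hx, hpy, hpx⟩

lemma conc_symm {x y : P ⊕ T} (hc : N.Concurrent x y) : N.Concurrent y x :=
  ⟨hc.2.1, hc.1, fun hcf => hc.2.2 (conflict_symm hcf)⟩

/-- A single flow step gives `le`. -/
lemma le_of_flow {x y : P ⊕ T} (hf : N.flow x y) : N.le x y :=
  Relation.ReflTransGen.single hf

/-- Key lemma: a remaining place of `C` is concurrent with a fresh place of `post t`. -/
lemma concA (h : N.IsOccurrence) {C : Set P} (hC : N.IsCut C) {t : T}
    (ht : ∀ p ∈ N.pre t, p ∈ C) {p q : P}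
    (hp : p ∈ C) (hpt : p ∉ N.pre t) (hq : q ∈ N.post t) (hpq : p ≠ q) :
    N.Concurrent (inl p) (inl q) := by
  refine ⟨?_, ?_, ?_⟩
  · -- ¬ le p q
    intro hle
    have h1 : N.le (inl p) (inr t) :=
      last_producer h hq hle (by simp [hpq])
    obtain ⟨r, hr, hpr⟩ := last_into_trans h1 (by simp)
    have hrC : r ∈ C := ht r hr
    have hprne : p ≠ r := fun e => hpt (e ▸ hr)
    exact (hC.1 p hp r hrC hprne).1 hpr
  · -- ¬ le q p
    intro hle
    rcases Relation.ReflTransGen.cases_head hle with heq | ⟨c, hqc, hcp⟩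
    · exact hpq (by injection heq.symm)
    · obtain ⟨t₁, rfl, hq1⟩ := flow_from_place hqc
      obtain ⟨r, hr⟩ := Multiset.exists_mem_of_ne_zero (h.pre_ne t)
      have hrC : r ∈ C := ht r hr
      have hrp : N.le (inl r) (inl p) :=
        Relation.ReflTransGen.head (show N.flow (inl r) (inr t) from hr)
          (Relation.ReflTransGen.head (show N.flow (inr t) (inl q) from hq)
            (Relation.ReflTransGen.head (show N.flow (inl q) (inr t₁) from hq1) hcp))
      have hrpne : r ≠ p := fun e => hpt (e ▸ hr)
      exact (hC.1 r hrC p hp hrpne).1 hrp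
  · -- ¬ Conflict p q
    rintro ⟨s, t₁, t₂, hne, hs1, hs2, h1p, h2q, hsp, hsq⟩
    have h2t : N.le (inr t₂) (inr t) := last_producer h hq h2q (by simp)
    by_cases ht2 : t₂ = t
    · subst ht2
      have hsC : s ∈ C := ht s hs2
      have hsple : N.le (inl s) (inl p) :=
        Relation.ReflTransGen.head (show N.flow (inl s) (inr t₁) from hs1) h1p
      have hspne : s ≠ p := fun e => hsp (by rw [e])
      exact (hC.1 s hsC p hp hspne).1 hsple
    · obtain ⟨r', hr', h2r'⟩ := last_into_trans h2t (by simp [ht2])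
      by_cases hsr : s = r'
      · subst hsr
        exact flow_le_absurd h (show N.flow (inl s) (inr t₂) from hs2) h2r'
      · have hconf : N.Conflict (inl p) (inl r') :=
          ⟨s, t₁, t₂, hne, hs1, hs2, h1p, h2r', hsp, by simp [hsr]⟩
        have hr'C : r' ∈ C := ht r' hr'
        have hpr'ne : p ≠ r' := fun e => hpt (e ▸ hr')
        exact (hC.1 p hp r' hr'C hpr'ne).2.2 hconf

/-- Key lemma: two distinct fresh places of `post t` are concurrent. -/
lemma concB (h : N.IsOccurrence) {C : Set P} (hC : N.IsCut C) {t : T}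
    (ht : ∀ p ∈ N.pre t, p ∈ C) {p q : P}
    (hp : p ∈ N.post t) (hq : q ∈ N.post t) (hpq : p ≠ q) :
    N.Concurrent (inl p) (inl q) := by
  have key : ∀ a b : P, a ∈ N.post t → b ∈ N.post t → a ≠ b →
      ¬ N.le (inl a) (inl b) := by
    intro a b ha hb hab hle
    have h1 : N.le (inl a) (inr t) := last_producer h hb hle (by simp [hab])
    obtain ⟨r, hr, har⟩ := last_into_trans h1 (by simp)
    exact net_lt_irrefl h (inr t)
      (Relation.TransGen.head' (show N.flow (inr t) (inl a) from ha)
        (Relation.ReflTransGen.tail har (show N.flow (inl r) (inr t) from hr)))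
  refine ⟨key p q hp hq hpq, key q p hq hp hpq.symm, ?_⟩
  rintro ⟨s, t₁, t₂, hne, hs1, hs2, h1p, h2q, hsp, hsq⟩
  have h1t : N.le (inr t₁) (inr t) := last_producer h hp h1p (by simp)
  have h2t : N.le (inr t₂) (inr t) := last_producer h hq h2q (by simp)
  by_cases ht1 : t₁ = t
  · subst ht1
    have ht2 : t₂ ≠ t₁ := hne.symm
    obtain ⟨r', hr', h2r'⟩ := last_into_trans h2t (by simp [ht2])
    by_cases hsr : s = r'
    · subst hsr
      exact flow_le_absurd h (show N.flow (inl s) (inr t₂) from hs2) h2r'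
    · have hsC : s ∈ C := ht s hs1
      have hr'C : r' ∈ C := ht r' hr'
      have hle : N.le (inl s) (inl r') :=
        Relation.ReflTransGen.head (show N.flow (inl s) (inr t₂) from hs2) h2r'
      exact (hC.1 s hsC r' hr'C hsr).1 hle
  · by_cases ht2 : t₂ = t
    · subst ht2
      obtain ⟨r', hr', h1r'⟩ := last_into_trans h1t (by simp [ht1])
      by_cases hsr : s = r'
      · subst hsr
        exact flow_le_absurd h (show N.flow (inl s) (inr t₁) from hs1) h1r'
      · have hsC : s ∈ C := ht s hs2
        have hr'C : r' ∈ C := ht r' hr'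
        have hle : N.le (inl s) (inl r') :=
          Relation.ReflTransGen.head (show N.flow (inl s) (inr t₁) from hs1) h1r'
        exact (hC.1 s hsC r' hr'C hsr).1 hle
    · exact h.no_self_conflict t
        ⟨s, t₁, t₂, hne, hs1, hs2, h1t, h2t, by simp, by simp⟩

end Aux

/-- In an occurrence net, if `C` is a cut and `t` a transition with
`pre(t) ⊆ C`, then `(C \ pre(t)) ∪ post(t)` is again a cut. -/
theorem stmt18 {P T : Type} (N : Net P T) (h : N.IsOccurrence)
    (C : Set P) (hC : N.IsCut C) (t : T) (ht : ∀ p ∈ N.pre t, p ∈ C) :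
    N.IsCut ((C \ {p | p ∈ N.pre t}) ∪ {p | p ∈ N.post t}) := by
  open Sum in
  constructor
  · -- pairwise concurrency
    rintro p (⟨hpC, hppre⟩ | hppost) q (⟨hqC, hqpre⟩ | hqpost) hpq
    · exact hC.1 p hpC q hqC hpq
    · exact concA h hC ht hpC hppre hqpost hpq
    · exact conc_symm (concA h hC ht hqC hqpre hppost hpq.symm)
    · exact concB h hC ht hppost hqpost hpq
  · -- maximality
    intro p hall
    by_cases hppost : p ∈ N.post t
    · exact Or.inr hppost
    have hpost : ∀ r ∈ N.post t, N.Concurrent (inl p) (inl r) := by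
      intro r hr
      exact hall r (Or.inr hr) (fun e => hppost (e ▸ hr))
    obtain ⟨r₀, hr₀⟩ := Multiset.exists_mem_of_ne_zero (h.post_ne t)
    -- p is concurrent with every member of C
    have hpC : p ∈ C := by
      refine hC.2 p ?_
      intro q hq hpq
      by_cases hqpre : q ∈ N.pre t
      · have hcr := hpost r₀ hr₀
        refine ⟨?_, ?_, ?_⟩
        · intro hle
          exact hcr.1 (Relation.ReflTransGen.tail
            (Relation.ReflTransGen.tail hle (show N.flow (inl q) (inr t) from hqpre))
            (show N.flow (inr t) (inl r₀) from hr₀))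
        · intro hle
          rcases Relation.ReflTransGen.cases_head hle with heq | ⟨c, hqc, hcp⟩
          · exact hpq (by injection heq.symm)
          · obtain ⟨t₁, rfl, hq1⟩ := flow_from_place hqc
            by_cases ht1 : t₁ = t
            · subst ht1
              obtain ⟨r', hr', hr'p⟩ := first_from_trans
                (show N.le (inr t₁) (inl p) from hcp) (by simp)
              have hr'ne : r' ≠ p := fun e => hppost (e ▸ hr')
              exact (hpost r' hr').2.1 hr'p
            · have hqr : q ≠ r₀ := by
                intro e
                exact flow_le_absurd h (show N.flow (inr t) (inl q) from e ▸ hr₀)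
                  (le_of_flow (show N.flow (inl q) (inr t) from hqpre))
              exact hcr.2.2 ⟨q, t₁, t, ht1, hq1, hqpre, hcp,
                le_of_flow (show N.flow (inr t) (inl r₀) from hr₀),
                by simp [hpq.symm], by simp [hqr]⟩
        · rintro ⟨s, t₁, t₂, hne, hs1, hs2, h1p, h2q, hsp, hsq⟩
          have h2r : N.le (inr t₂) (inl r₀) :=
            Relation.ReflTransGen.tail
              (Relation.ReflTransGen.tail h2q (show N.flow (inl q) (inr t) from hqpre))
              (show N.flow (inr t) (inl r₀) from hr₀)
          by_cases hsr : s = r₀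
          · subst hsr
            exact flow_le_absurd h (show N.flow (inl s) (inr t₂) from hs2) h2r
          · exact hcr.2.2 ⟨s, t₁, t₂, hne, hs1, hs2, h1p, h2r, hsp, by simp [hsr]⟩
      · exact hall q (Or.inl ⟨hq, hqpre⟩) hpq
    have hppre : p ∉ N.pre t := by
      intro hpre
      exact (hpost r₀ hr₀).1
        (Relation.ReflTransGen.head (show N.flow (inl p) (inr t) from hpre)
          (le_of_flow (show N.flow (inr t) (inl r₀) from hr₀)))
    exact Or.inl ⟨hpC, hppre⟩
end
end
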